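/- arXiv:2410.03318 — 4 statements merged into one kernel-verified Lean document; each statement's English description precedes it below -/
import Mathlib

section
/- Under the same hypotheses as above, assume additionally that for every s > 0, whenever λG(s) = F(s) and λG > F on (0, s), one has (F/G)'(s) > 0 (i.e. the function Z := (F/G)' is positive where F > 0). Then m_λ → +∞ as λ → +∞. -/
open Filter Set

/-- Under (A0)--(A1), `m_λ → +∞` as `λ → +∞`. -/
theorem stmt_2 (F G : ℝ → ℝ)
    (hF : ContDiffOn ℝ 1 F (Set.Ici 0)) (hG : ContDiffOn ℝ 1 G (Set.Ici 0))
    (hF0 : F 0 = 0) (hG0 : G 0 = 0)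
    (hF'0 : derivWithin F (Set.Ici 0) 0 = 0) (hG'0 : derivWithin G (Set.Ici 0) 0 = 0)
    (hG' : ∀ s > (0:ℝ), 0 < derivWithin G (Set.Ici 0) s)
    (hratio0 : Tendsto (fun s => F s / G s) (nhdsWithin 0 (Set.Ioi 0)) (nhds 0))
    (hratioInf : Tendsto (fun s => F s / G s) atTop atTop)
    (hZ : ∀ s > (0:ℝ), 0 < F s → 0 < deriv (fun t => F t / G t) s)
    (m : ℝ → ℝ)
    (hm : ∀ l > (0:ℝ), 0 < m l ∧ (∀ s, 0 < s → s < m l → F s < l * G s) ∧ l * G (m l) = F (m l)) :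
    Tendsto m atTop atTop := by
  -- G is strictly increasing on [0,∞), hence positive on (0,∞)
  have hGderiv : ∀ s ∈ interior (Set.Ici (0:ℝ)), 0 < deriv G s := by
    intro s hs
    rw [interior_Ici] at hs
    have hmem : Set.Ici (0:ℝ) ∈ nhds s := Ici_mem_nhds hs
    have := hG' s hs
    rwa [derivWithin_of_mem_nhds hmem] at this
  have hGmono : StrictMonoOn G (Set.Ici 0) :=
    strictMonoOn_of_deriv_pos (convex_Ici 0) hG.continuousOn hGderiv
  have hGpos : ∀ s, 0 < s → 0 < G s := by
    intro s hs
    have := hGmono (self_mem_Ici) (le_of_lt hs : (0:ℝ) ≤ s) hs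
    rwa [hG0] at this
  rw [tendsto_atTop]
  intro b
  set M := max b 1 with hMdef
  have hM0 : (0:ℝ) < M := lt_of_lt_of_le one_pos (le_max_right _ _)
  -- near 0 the ratio is < 1
  have h1 : ∀ᶠ s in nhdsWithin 0 (Set.Ioi (0:ℝ)), F s / G s < 1 :=
    hratio0.eventually_lt_const one_pos
  obtain ⟨δ, hδ0, hδ⟩ := mem_nhdsGT_iff_exists_Ioo_subset.1 h1
  have hδ0' : (0:ℝ) < δ := hδ0
  -- the ratio is bounded on [δ, M]
  have hcont : ContinuousOn (fun s => F s / G s) (Set.Icc δ M) := by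
    apply ContinuousOn.div
    · exact hF.continuousOn.mono (fun x hx => le_trans (le_of_lt hδ0') hx.1)
    · exact hG.continuousOn.mono (fun x hx => le_trans (le_of_lt hδ0') hx.1)
    · exact fun s hs => ne_of_gt (hGpos s (lt_of_lt_of_le hδ0' hs.1))
  obtain ⟨C₀, hC₀⟩ := (isCompact_Icc.image_of_continuousOn hcont).bddAbove
  set C := max C₀ 1 with hCdef
  filter_upwards [eventually_gt_atTop (max C 0)] with l hl
  have hl0 : (0:ℝ) < l := lt_of_le_of_lt (le_max_right _ _) hl
  have hlC : C < l := lt_of_le_of_lt (le_max_left _ _) hl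
  obtain ⟨hmpos, hmlt, hmeq⟩ := hm l hl0
  have hGm : 0 < G (m l) := hGpos _ hmpos
  have hratio : F (m l) / G (m l) = l := by
    field_simp [ne_of_gt hGm]
    linarith [hmeq]
  by_contra hble
  push_neg at hble
  have hmM : m l ≤ M := le_trans (le_of_lt hble) (le_max_left _ _)
  rcases lt_or_ge (m l) δ with hcase | hcase
  · have : F (m l) / G (m l) < 1 := hδ ⟨hmpos, hcase⟩
    rw [hratio] at this
    have : l < C := lt_of_lt_of_le this (le_max_right _ _)
    linarith
  · have hmem : F (m l) / G (m l) ∈ (fun s => F s / G s) '' Set.Icc δ M :=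
      ⟨m l, ⟨hcase, hmM⟩, rfl⟩
    have : F (m l) / G (m l) ≤ C₀ := hC₀ hmem
    rw [hratio] at this
    have : l ≤ C := le_trans this (le_max_left _ _)
    linarith
end

section
/- Under the same hypotheses, let m₀ := max{t ≥ 0 : F ≤ 0 on [0,t]}. Then m_λ → m₀ as λ → 0⁺. In particular m₀ < m_λ for every λ > 0, and the (monotone) limit M := lim_{λ→0⁺} m_λ satisfies F(M) = 0, which together with positivity of F on (m₀, +∞) forces M = m₀. -/
open Filter Set

/-- Under (A0)--(A1), `m_λ → m₀` as `λ → 0⁺`, and `m₀ < m_λ` for every `λ > 0`. -/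
theorem stmt_3 (F G : ℝ → ℝ)
    (hF : ContDiffOn ℝ 1 F (Set.Ici 0)) (hG : ContDiffOn ℝ 1 G (Set.Ici 0))
    (hF0 : F 0 = 0) (hG0 : G 0 = 0)
    (hF'0 : derivWithin F (Set.Ici 0) 0 = 0) (hG'0 : derivWithin G (Set.Ici 0) 0 = 0)
    (hG' : ∀ s > (0:ℝ), 0 < derivWithin G (Set.Ici 0) s)
    (hratio0 : Tendsto (fun s => F s / G s) (nhdsWithin 0 (Set.Ioi 0)) (nhds 0))
    (hratioInf : Tendsto (fun s => F s / G s) atTop atTop)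
    (hZ : ∀ s > (0:ℝ), 0 < F s → 0 < deriv (fun t => F t / G t) s)
    (m : ℝ → ℝ)
    (hm : ∀ l > (0:ℝ), 0 < m l ∧ (∀ s, 0 < s → s < m l → F s < l * G s) ∧ l * G (m l) = F (m l))
    (hmono : ∀ l L : ℝ, 0 < l → l < L → m l < m L)
    (m₀ : ℝ)
    (hm₀ : IsGreatest {t : ℝ | 0 ≤ t ∧ ∀ s ∈ Set.Icc 0 t, F s ≤ 0} m₀) :
    Tendsto m (nhdsWithin 0 (Set.Ioi 0)) (nhds m₀) ∧ ∀ l > (0:ℝ), m₀ < m l := by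
  -- G is positive on (0, ∞)
  have hGmono : StrictMonoOn G (Set.Ici 0) := by
    apply strictMonoOn_of_deriv_pos (convex_Ici 0) (hG.continuousOn)
    intro x hx
    rw [interior_Ici] at hx
    have : derivWithin G (Set.Ici 0) x = deriv G x :=
      derivWithin_of_mem_nhds (Ici_mem_nhds hx)
    rw [← this]
    exact hG' x hx
  have hGpos : ∀ s > (0:ℝ), 0 < G s := by
    intro s hs
    have := hGmono (self_mem_Ici) (le_of_lt hs) hs
    rwa [hG0] at this
  -- m₀ < m l for every l > 0
  have hlt : ∀ l > (0:ℝ), m₀ < m l := by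
    intro l hl
    by_contra h
    push_neg at h
    obtain ⟨hml, _, heq⟩ := hm l hl
    have hFle : F (m l) ≤ 0 := hm₀.1.2 (m l) ⟨hml.le, h⟩
    have : 0 < F (m l) := by
      rw [← heq]; exact mul_pos hl (hGpos _ hml)
    linarith
  refine ⟨?_, hlt⟩
  -- the infimum of the m l equals m₀
  have hbdd : BddBelow (m '' Set.Ioi 0) := by
    refine ⟨m₀, ?_⟩
    rintro _ ⟨l, hl, rfl⟩
    exact (hlt l hl).le
  have hne : (m '' Set.Ioi 0).Nonempty := ⟨m 1, 1, Set.mem_Ioi.mpr one_pos, rfl⟩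
  set M := sInf (m '' Set.Ioi 0) with hM
  have hMge : m₀ ≤ M := le_csInf hne (by rintro _ ⟨l, hl, rfl⟩; exact (hlt l hl).le)
  have hMle_ml : ∀ l > (0:ℝ), M ≤ m l := fun l hl => csInf_le hbdd ⟨l, hl, rfl⟩
  have hMeq : M = m₀ := by
    by_contra hne'
    have hMgt : m₀ < M := lt_of_le_of_ne hMge (Ne.symm hne')
    set t := (m₀ + M) / 2 with ht
    have ht1 : m₀ < t := by rw [ht]; linarith
    have ht2 : t < M := by rw [ht]; linarith
    have ht0 : 0 ≤ t := le_trans hm₀.1.1 ht1.le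
    -- t is not in the set, so some s ∈ [0,t] has F s > 0
    have hnotmem : ¬ (0 ≤ t ∧ ∀ s ∈ Set.Icc 0 t, F s ≤ 0) := by
      intro hmem
      exact absurd (hm₀.2 hmem) (not_le.mpr ht1)
    push_neg at hnotmem
    obtain ⟨s, hs_mem, hFs⟩ := hnotmem ht0
    have hsm₀ : m₀ < s := by
      by_contra h
      push_neg at h
      exact absurd (hm₀.1.2 s ⟨hs_mem.1, h⟩) (not_le.mpr hFs)
    have hs_pos : 0 < s := lt_of_le_of_lt hm₀.1.1 hsm₀
    -- F s < l * G s for every l > 0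
    have hkey : ∀ l > (0:ℝ), F s < l * G s := by
      intro l hl
      exact (hm l hl).2.1 s hs_pos (lt_of_le_of_lt hs_mem.2 (lt_of_lt_of_le ht2 (hMle_ml l hl)))
    have hGs : 0 < G s := hGpos s hs_pos
    have h1 : F s < (F s / (2 * G s)) * G s := hkey _ (div_pos hFs (by linarith))
    have h2 : F s / (2 * G s) * G s = F s / 2 := by field_simp
    rw [h2] at h1
    linarith
  -- convergence via monotonicity
  rw [Metric.tendsto_nhdsWithin_nhds]
  intro ε hε
  have : sInf (m '' Set.Ioi 0) < m₀ + ε := by rw [← hMeq] at *; linarith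
  obtain ⟨_, ⟨l₀, hl₀, rfl⟩, hml₀⟩ := exists_lt_of_csInf_lt hne this
  refine ⟨l₀, hl₀, ?_⟩
  intro l hl hdist
  rw [Real.dist_eq] at hdist ⊢
  have hl0 : (0:ℝ) < l := hl
  have hll₀ : l < l₀ := by
    rwa [sub_zero, abs_of_pos hl0] at hdist
  have h1 : m l < m₀ + ε := lt_trans (hmono l l₀ hl0 hll₀) hml₀
  have h2 : m₀ ≤ m l := hMeq ▸ hMle_ml l hl0
  rw [abs_lt]
  constructor <;> linarith
end

section
/- Let m > 0, let g : (0, m] → (0, ∞) be continuous and integrable near 0, let Φ(t) := (∫₀^t g(s) ds)², and let h : (0, m] → ℝ be a C¹ function with h(m) − h(u) = ∫_u^m Z(s) ds where Z is continuous on (0, m] and satisfies 0 < Z(s) ≤ L Φ'(s) for all s ∈ (0, m), for some constant L > 0. Then ∫₀^m g(u) (h(m) − h(u))^{−1/2} du ≥ (1/√L) · (π/2). -/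
open Filter Set MeasureTheory Topology

/-- Comparison step: `∫₀^m g(u) (h(m) − h(u))^{-1/2} du ≥ (π/2)/√L`. -/
theorem stmt_5 (m L : ℝ) (hm : 0 < m) (hL : 0 < L) (g Z h : ℝ → ℝ)
    (hgc : ContinuousOn g (Set.Ioc 0 m))
    (hgpos : ∀ s ∈ Set.Ioc 0 m, 0 < g s)
    (hgint : IntegrableOn g (Set.Ioo 0 m))
    (hZc : ContinuousOn Z (Set.Ioc 0 m))
    (hZ : ∀ s ∈ Set.Ioo 0 m, 0 < Z s ∧ Z s ≤ L * (2 * g s * ∫ t in Set.Ioo 0 s, g t))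
    (hh : ∀ u ∈ Set.Ioo 0 m, h m - h u = ∫ s in Set.Ioo u m, Z s) :
    ENNReal.ofReal ((1 / Real.sqrt L) * (Real.pi / 2)) ≤
      ∫⁻ u in Set.Ioo 0 m, ENNReal.ofReal (g u / Real.sqrt (h m - h u)) := by
  set F : ℝ → ℝ := fun u => ∫ t in Set.Ioo 0 u, g t with hFdef
  have hsqL : 0 < Real.sqrt L := Real.sqrt_pos.mpr hL
  have hgint' : IntegrableOn g (Set.Ioc 0 m) := by
    rw [IntegrableOn, ← Measure.restrict_congr_set (Ioo_ae_eq_Ioc (a := (0:ℝ)) (b := m))]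
    exact hgint
  -- splitting lemma
  have hFsplit : ∀ a b : ℝ, 0 < a → a ≤ b → b ≤ m → F b = F a + ∫ t in a..b, g t := by
    intro a b ha hab hbm
    rw [intervalIntegral.integral_of_le hab]
    simp only [hFdef]
    rw [← integral_Ioc_eq_integral_Ioo, ← integral_Ioc_eq_integral_Ioo,
      ← setIntegral_union (Set.Ioc_disjoint_Ioc_of_le le_rfl) measurableSet_Ioc
        (hgint'.mono_set (Set.Ioc_subset_Ioc le_rfl (hab.trans hbm)))
        (hgint'.mono_set (Set.Ioc_subset_Ioc ha.le hbm)),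
      Set.Ioc_union_Ioc_eq_Ioc ha.le hab]
  have hFnonneg : ∀ b : ℝ, b ≤ m → 0 ≤ F b := by
    intro b hb
    exact setIntegral_nonneg measurableSet_Ioo fun x hx =>
      (hgpos x ⟨hx.1, hx.2.le.trans hb⟩).le
  -- interval integrability of g on subintervals
  have hgii : ∀ a b : ℝ, 0 < a → a ≤ b → b ≤ m → IntervalIntegrable g volume a b := by
    intro a b ha hab hbm
    refine (hgc.mono ?_).intervalIntegrable
    rw [Set.uIcc_of_le hab]
    exact fun x hx => ⟨ha.trans_le hx.1, hx.2.trans hbm⟩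
  have hFlt : ∀ u : ℝ, 0 < u → u < m → F u < F m := by
    intro u hu hum
    have := hFsplit u m hu hum.le le_rfl
    rw [this]
    have hpos : 0 < ∫ t in u..m, g t :=
      intervalIntegral.intervalIntegral_pos_of_pos_on (hgii u m hu hum.le le_rfl)
        (fun x hx => hgpos x ⟨hu.trans hx.1, hx.2.le⟩) hum
    linarith
  have hFmpos : 0 < F m := by
    have h1 := hFlt (m / 2) (by linarith) (by linarith)
    have h2 := hFnonneg (m / 2) (by linarith)
    linarith
  -- derivative of F
  have hFderiv : ∀ x ∈ Set.Ioo 0 m, HasDerivAt F (g x) x := by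
    intro x hx
    have hδ : 0 < x / 2 := by linarith [hx.1]
    have hG : HasDerivAt (fun v => F (x / 2) + ∫ t in (x/2)..v, g t) (g x) x := by
      refine HasDerivAt.const_add _ ?_
      refine intervalIntegral.integral_hasDerivAt_right
        (hgii (x/2) x hδ (by linarith [hx.1]) hx.2.le) ?_ ?_
      · exact (hgc.mono Set.Ioo_subset_Ioc_self).stronglyMeasurableAtFilter isOpen_Ioo x hx
      · exact (hgc.mono Set.Ioo_subset_Ioc_self).continuousAt (isOpen_Ioo.mem_nhds hx)
    refine hG.congr_of_eventuallyEq ?_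
    have hmem : Set.Ioo (x/2) m ∈ 𝓝 x := isOpen_Ioo.mem_nhds ⟨by linarith [hx.1], hx.2⟩
    filter_upwards [hmem] with v hv
    exact hFsplit (x/2) v hδ hv.1.le hv.2.le
  -- continuity of F on [a, m] for 0 < a
  have hFcont : ∀ a : ℝ, 0 < a → a ≤ m → ContinuousOn F (Set.Icc a m) := by
    intro a ha ham
    have hint : IntegrableOn g (Set.Icc a m) := by
      refine hgint'.mono_set fun x hx => ⟨ha.trans_le hx.1, hx.2⟩
    have hcp := intervalIntegral.continuousOn_primitive (f := g) (a := a) (b := m) hint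
    have : ContinuousOn (fun v => F a + ∫ t in Set.Ioc a v, g t) (Set.Icc a m) :=
      continuousOn_const.add hcp
    refine this.congr fun v hv => ?_
    rw [hFsplit a v ha hv.1 hv.2, intervalIntegral.integral_of_le hv.1]
  -- FTC for F^2
  have hΦ : ∀ u : ℝ, 0 < u → u < m →
      (∫ s in Set.Ioo u m, 2 * g s * F s) = F m ^ 2 - F u ^ 2 := by
    intro u hu hum
    have hcont2 : ContinuousOn (fun s => 2 * g s * F s) (Set.Icc u m) := by
      have : Set.Icc u m ⊆ Set.Ioc 0 m := fun x hx => ⟨hu.trans_le hx.1, hx.2⟩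
      exact ((continuousOn_const.mul (hgc.mono this)).mul (hFcont u hu hum.le))
    have := intervalIntegral.integral_eq_sub_of_hasDeriv_right_of_le (f := fun v => F v ^ 2)
      (f' := fun s => 2 * g s * F s) hum.le
      ((hFcont u hu hum.le).pow 2)
      (fun x hx => by
        have hx' : x ∈ Set.Ioo 0 m := ⟨hu.trans hx.1, hx.2⟩
        have := ((hFderiv x hx').pow 2)
        show HasDerivWithinAt (F ^ 2) _ _ _
        simpa [mul_comm, mul_assoc, mul_left_comm] using this.hasDerivWithinAt)
      (hcont2.intervalIntegrable_of_Icc hum.le)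
    rw [← integral_Ioc_eq_integral_Ioo, ← intervalIntegral.integral_of_le hum.le]
    exact this
  -- key bounds
  have hkey : ∀ u ∈ Set.Ioo 0 m,
      0 < h m - h u ∧ h m - h u ≤ L * (F m ^ 2 - F u ^ 2) := by
    intro u hu
    have hZii : IntervalIntegrable Z volume u m := by
      refine (hZc.mono ?_).intervalIntegrable
      rw [Set.uIcc_of_le hu.2.le]
      exact fun x hx => ⟨hu.1.trans_le hx.1, hx.2⟩
    constructor
    · rw [hh u hu, ← integral_Ioc_eq_integral_Ioo, ← intervalIntegral.integral_of_le hu.2.le]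
      exact intervalIntegral.intervalIntegral_pos_of_pos_on hZii
        (fun x hx => (hZ x ⟨hu.1.trans hx.1, hx.2⟩).1) hu.2
    · rw [hh u hu]
      have hmono : (∫ s in Set.Ioo u m, Z s) ≤ ∫ s in Set.Ioo u m, L * (2 * g s * F s) := by
        refine setIntegral_mono_on ?_ ?_ measurableSet_Ioo ?_
        · exact hZii.1.mono_set Set.Ioo_subset_Ioc_self
        · have hc : ContinuousOn (fun s => L * (2 * g s * F s)) (Set.Icc u m) := by
            have hsub : Set.Icc u m ⊆ Set.Ioc 0 m := fun x hx => ⟨hu.1.trans_le hx.1, hx.2⟩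
            exact continuousOn_const.mul ((continuousOn_const.mul (hgc.mono hsub)).mul
              (hFcont u hu.1 hu.2.le))
          exact (hc.integrableOn_compact isCompact_Icc).mono_set Set.Ioo_subset_Icc_self
        · exact fun x hx => (hZ x ⟨hu.1.trans hx.1, hx.2⟩).2
      calc (∫ s in Set.Ioo u m, Z s) ≤ ∫ s in Set.Ioo u m, L * (2 * g s * F s) := hmono
        _ = L * ∫ s in Set.Ioo u m, 2 * g s * F s := by rw [integral_const_mul]
        _ = L * (F m ^ 2 - F u ^ 2) := by rw [hΦ u hu.1 hu.2]
  have hFm2 : ∀ x ∈ Set.Ioo 0 m, 0 < F m ^ 2 - F x ^ 2 := by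
    intro x hx
    have h1 := hFnonneg x hx.2.le
    have h2 := hFlt x hx.1 hx.2
    nlinarith
  have hpt : ∀ u ∈ Set.Ioo 0 m,
      g u / (Real.sqrt L * Real.sqrt (F m ^ 2 - F u ^ 2)) ≤ g u / Real.sqrt (h m - h u) := by
    intro u hu
    obtain ⟨hpos, hle⟩ := hkey u hu
    have h1 : Real.sqrt (h m - h u) ≤ Real.sqrt L * Real.sqrt (F m ^ 2 - F u ^ 2) := by
      rw [← Real.sqrt_mul hL.le]
      exact Real.sqrt_le_sqrt hle
    have h2 : 0 < Real.sqrt (h m - h u) := Real.sqrt_pos.mpr hpos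
    have h0 : 0 ≤ g u := (hgpos u ⟨hu.1, hu.2.le⟩).le
    gcongr
  have hFTC : ∀ ε m' : ℝ, 0 < ε → ε ≤ m' → m' < m →
      (∫ u in ε..m', g u / (Real.sqrt L * Real.sqrt (F m ^ 2 - F u ^ 2))) =
        (1 / Real.sqrt L) * Real.arcsin (F m' / F m) -
          (1 / Real.sqrt L) * Real.arcsin (F ε / F m) := by
    intro ε m' hε hεm' hm'
    have hsub : Set.Icc ε m' ⊆ Set.Ioo 0 m := fun x hx =>
      ⟨hε.trans_le hx.1, lt_of_le_of_lt hx.2 hm'⟩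
    refine intervalIntegral.integral_eq_sub_of_hasDerivAt
      (f := fun u => (1 / Real.sqrt L) * Real.arcsin (F u / F m)) (fun x hx => ?_) ?_
    · rw [Set.uIcc_of_le hεm'] at hx
      have hx' := hsub hx
      have hFx0 := hFnonneg x hx'.2.le
      have hFxm := hFlt x hx'.1 hx'.2
      have hrle : 0 ≤ F x / F m := div_nonneg hFx0 hFmpos.le
      have hr1 : F x / F m ≠ -1 := by intro hcon; rw [hcon] at hrle; linarith
      have hr2 : F x / F m ≠ 1 := ne_of_lt ((div_lt_one hFmpos).mpr hFxm)
      have hd1 : HasDerivAt (fun u => F u / F m) (g x / F m) x := (hFderiv x hx').div_const _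
      have hd2 := (Real.hasDerivAt_arcsin hr1 hr2).comp x hd1
      have hd3 := hd2.const_mul (1 / Real.sqrt L)
      simp only [Function.comp_def] at hd3
      refine hd3.congr_deriv ?_
      have hpos2 := hFm2 x hx'
      have hs : Real.sqrt (1 - (F x / F m) ^ 2) = Real.sqrt (F m ^ 2 - F x ^ 2) / F m := by
        rw [show (1:ℝ) - (F x / F m) ^ 2 = (F m ^ 2 - F x ^ 2) / F m ^ 2 by
            field_simp,
          Real.sqrt_div hpos2.le, Real.sqrt_sq hFmpos.le]
      rw [hs]
      have hsq : 0 < Real.sqrt (F m ^ 2 - F x ^ 2) := Real.sqrt_pos.mpr hpos2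
      field_simp
    · have hc : ContinuousOn
          (fun u => g u / (Real.sqrt L * Real.sqrt (F m ^ 2 - F u ^ 2))) (Set.Icc ε m') := by
        have hFc : ContinuousOn F (Set.Icc ε m') :=
          (hFcont ε hε (by linarith)).mono (Set.Icc_subset_Icc le_rfl hm'.le)
        have hgc' : ContinuousOn g (Set.Icc ε m') :=
          hgc.mono fun x hx => ⟨hε.trans_le hx.1, hx.2.trans hm'.le⟩
        refine hgc'.div
          (continuousOn_const.mul ((continuousOn_const.sub (hFc.pow 2)).sqrt)) ?_
        intro x hx
        exact ne_of_gt (mul_pos hsqL (Real.sqrt_pos.mpr (hFm2 x (hsub hx))))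
      exact hc.intervalIntegrable_of_Icc hεm'
  have hstep : ∀ ε m' : ℝ, 0 < ε → ε ≤ m' → m' < m →
      ENNReal.ofReal ((1 / Real.sqrt L) * Real.arcsin (F m' / F m) -
        (1 / Real.sqrt L) * Real.arcsin (F ε / F m)) ≤
        ∫⁻ u in Set.Ioo 0 m, ENNReal.ofReal (g u / Real.sqrt (h m - h u)) := by
    intro ε m' hε hεm' hm'
    have hsub : Set.Ioo ε m' ⊆ Set.Ioo 0 m := fun x hx => ⟨hε.trans hx.1, hx.2.trans hm'⟩
    have hψint : IntegrableOn
        (fun u => g u / (Real.sqrt L * Real.sqrt (F m ^ 2 - F u ^ 2))) (Set.Ioo ε m') := by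
      have hc : ContinuousOn
          (fun u => g u / (Real.sqrt L * Real.sqrt (F m ^ 2 - F u ^ 2))) (Set.Icc ε m') := by
        have hFc : ContinuousOn F (Set.Icc ε m') :=
          (hFcont ε hε (by linarith)).mono (Set.Icc_subset_Icc le_rfl hm'.le)
        have hgc' : ContinuousOn g (Set.Icc ε m') :=
          hgc.mono fun x hx => ⟨hε.trans_le hx.1, hx.2.trans hm'.le⟩
        refine hgc'.div
          (continuousOn_const.mul ((continuousOn_const.sub (hFc.pow 2)).sqrt)) ?_
        intro x hx
        have hx' : x ∈ Set.Ioo 0 m := ⟨hε.trans_le hx.1, lt_of_le_of_lt hx.2 hm'⟩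
        exact ne_of_gt (mul_pos hsqL (Real.sqrt_pos.mpr (hFm2 x hx')))
      exact (hc.integrableOn_compact isCompact_Icc).mono_set Set.Ioo_subset_Icc_self
    have hψnn : ∀ u ∈ Set.Ioo ε m',
        0 ≤ g u / (Real.sqrt L * Real.sqrt (F m ^ 2 - F u ^ 2)) := by
      intro u hu
      have h1 := (hgpos u ⟨(hsub hu).1, (hsub hu).2.le⟩).le
      positivity
    calc ENNReal.ofReal ((1 / Real.sqrt L) * Real.arcsin (F m' / F m) -
          (1 / Real.sqrt L) * Real.arcsin (F ε / F m))
        = ENNReal.ofReal (∫ u in Set.Ioo ε m',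
            g u / (Real.sqrt L * Real.sqrt (F m ^ 2 - F u ^ 2))) := by
          rw [← integral_Ioc_eq_integral_Ioo, ← intervalIntegral.integral_of_le hεm',
            hFTC ε m' hε hεm' hm']
      _ = ∫⁻ u in Set.Ioo ε m',
            ENNReal.ofReal (g u / (Real.sqrt L * Real.sqrt (F m ^ 2 - F u ^ 2))) := by
          rw [ofReal_integral_eq_lintegral_ofReal hψint
            ((ae_restrict_iff' measurableSet_Ioo).mpr (Eventually.of_forall hψnn))]
      _ ≤ ∫⁻ u in Set.Ioo ε m', ENNReal.ofReal (g u / Real.sqrt (h m - h u)) := by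
          refine lintegral_mono_ae
            ((ae_restrict_iff' measurableSet_Ioo).mpr (Eventually.of_forall fun u hu => ?_))
          exact ENNReal.ofReal_le_ofReal (hpt u (hsub hu))
      _ ≤ ∫⁻ u in Set.Ioo 0 m, ENNReal.ofReal (g u / Real.sqrt (h m - h u)) :=
          lintegral_mono_set hsub
  -- sequences ε_n → 0, m'_n → m
  have hseq3 : ∀ n : ℕ, (0:ℝ) < (n:ℝ) + 3 := fun n => by positivity
  set e : ℕ → ℝ := fun n => m / ((n:ℝ) + 3) with he
  set p : ℕ → ℝ := fun n => m - m / ((n:ℝ) + 3) with hp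
  have hepos : ∀ n, 0 < e n := fun n => div_pos hm (hseq3 n)
  have heth : ∀ n : ℕ, e n ≤ m / 3 := by
    intro n
    rw [he]
    rw [div_le_div_iff₀ (hseq3 n) (by norm_num : (0:ℝ) < 3)]
    nlinarith [Nat.cast_nonneg (α := ℝ) n, hm.le]
  have hem : ∀ n, e n ≤ p n := by
    intro n
    have h1 := heth n
    have h2 : p n = m - e n := rfl
    rw [h2]; linarith
  have hpm : ∀ n, p n < m := by
    intro n
    have := hepos n
    have h2 : p n = m - e n := rfl
    rw [h2]; linarith
  have heanti : Antitone e := by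
    intro a b hab
    show m / ((b:ℝ) + 3) ≤ m / ((a:ℝ) + 3)
    have hc : ((a:ℝ) + 3) ≤ ((b:ℝ) + 3) := by
      have : (a:ℝ) ≤ (b:ℝ) := Nat.cast_le.mpr hab
      linarith
    gcongr
  have hmono1 : Monotone fun n : ℕ => Set.Ioo (e n) m := fun a b hab =>
    Set.Ioo_subset_Ioo (heanti hab) le_rfl
  have hU1 : (⋃ n : ℕ, Set.Ioo (e n) m) = Set.Ioo 0 m := by
    apply Set.Subset.antisymm
    · exact Set.iUnion_subset fun n => Set.Ioo_subset_Ioo (hepos n).le le_rfl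
    · intro x hx
      obtain ⟨n, hn⟩ := exists_nat_gt (m / x)
      refine Set.mem_iUnion.mpr ⟨n, ⟨?_, hx.2⟩⟩
      show m / ((n:ℝ) + 3) < x
      rw [div_lt_iff₀ (hseq3 n)]
      have h1 : m / x < (n:ℝ) + 3 := by linarith
      have := (div_lt_iff₀ hx.1).mp h1
      linarith
  have htendF1 : Tendsto (fun n => ∫ t in Set.Ioo (e n) m, g t) atTop (𝓝 (F m)) := by
    have h := tendsto_setIntegral_of_monotone (fun n : ℕ => measurableSet_Ioo) hmono1
      (by rw [hU1]; exact hgint)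
    rwa [hU1] at h
  have hFe : Tendsto (fun n => F (e n)) atTop (𝓝 0) := by
    have heq : ∀ n, F (e n) = F m - ∫ t in Set.Ioo (e n) m, g t := by
      intro n
      have h := hFsplit (e n) m (hepos n) (by linarith [heth n, hm]) le_rfl
      rw [intervalIntegral.integral_of_le (by linarith [heth n, hm]),
        integral_Ioc_eq_integral_Ioo] at h
      linarith
    simp only [heq]
    have h := (tendsto_const_nhds (x := F m) (f := atTop)).sub htendF1
    simpa using h
  have hmono2 : Monotone fun n : ℕ => Set.Ioo (0:ℝ) (p n) := by
    intro a b hab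
    apply Set.Ioo_subset_Ioo le_rfl
    have := heanti hab
    show m - m / ((a:ℝ) + 3) ≤ m - m / ((b:ℝ) + 3)
    have ha : e b ≤ e a := heanti hab
    simp only [he] at ha
    linarith
  have hU2 : (⋃ n : ℕ, Set.Ioo (0:ℝ) (p n)) = Set.Ioo 0 m := by
    apply Set.Subset.antisymm
    · exact Set.iUnion_subset fun n => Set.Ioo_subset_Ioo le_rfl (hpm n).le
    · intro x hx
      obtain ⟨n, hn⟩ := exists_nat_gt (m / (m - x))
      refine Set.mem_iUnion.mpr ⟨n, ⟨hx.1, ?_⟩⟩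
      show x < m - m / ((n:ℝ) + 3)
      have hmx : 0 < m - x := by linarith [hx.2]
      have h1 : m / (m - x) < (n:ℝ) + 3 := by linarith
      have h2 := (div_lt_iff₀ hmx).mp h1
      have h3 : m / ((n:ℝ) + 3) < m - x := by
        rw [div_lt_iff₀ (hseq3 n)]
        linarith
      linarith
  have htendF2 : Tendsto (fun n => F (p n)) atTop (𝓝 (F m)) := by
    have h := tendsto_setIntegral_of_monotone (fun n : ℕ => measurableSet_Ioo) hmono2
      (by rw [hU2]; exact hgint)
    rw [hU2] at h
    exact h
  -- pass to the limit
  have h1 : Tendsto (fun n => F (p n) / F m) atTop (𝓝 1) := by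
    have h := htendF2.div_const (F m)
    rwa [div_self hFmpos.ne'] at h
  have h2 : Tendsto (fun n => F (e n) / F m) atTop (𝓝 0) := by
    have h := hFe.div_const (F m)
    rwa [zero_div] at h
  have h3 : Tendsto (fun n => (1 / Real.sqrt L) * Real.arcsin (F (p n) / F m) -
      (1 / Real.sqrt L) * Real.arcsin (F (e n) / F m)) atTop
      (𝓝 ((1 / Real.sqrt L) * (Real.pi / 2))) := by
    have ha := (Real.continuous_arcsin.tendsto 1).comp h1
    have hb := (Real.continuous_arcsin.tendsto 0).comp h2
    rw [Real.arcsin_one] at ha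
    rw [Real.arcsin_zero] at hb
    have h := (((tendsto_const_nhds (x := 1 / Real.sqrt L) (f := atTop)).mul ha).sub
      ((tendsto_const_nhds (x := 1 / Real.sqrt L) (f := atTop)).mul hb))
    simpa using h
  have hlim := (ENNReal.continuous_ofReal.tendsto _).comp h3
  refine le_of_tendsto hlim (Eventually.of_forall fun n => ?_)
  exact hstep (e n) (p n) (hepos n) (hem n) (hpm n)
end

section
/- Let m ≥ 1 be an integer and F ∈ C(ℝ) with F ≥ 0 and lim_{|t|→∞} F(t)/|t|^{2+4m} = +∞. For u ∈ H^m(ℝ) \ {0}, with φ_u(s) := (s^{2m}/2) ∫_ℝ |u^{(m)}|² dx − (1/s) ∫_ℝ F(√s u(x)) dx, one has φ_u(s) → −∞ as s → +∞. -/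
open Filter Set MeasureTheory

/-- The fiber map `φ_u(s) → −∞` as `s → +∞`. -/
theorem stmt_8 (m : ℕ) (hm : 1 ≤ m)
    (F : ℝ → ℝ) (hFc : Continuous F) (hFnn : ∀ t, 0 ≤ F t)
    (hFlim : Tendsto (fun t => F t / |t| ^ (2 + 4 * m)) (cocompact ℝ) atTop)
    (u : ℝ → ℝ) (humeas : Measurable u)
    (hune : ¬ (∀ᵐ x ∂(volume : Measure ℝ), u x = 0))
    (hint : ∀ s > (0:ℝ), Integrable (fun x => F (Real.sqrt s * u x))) :
    Tendsto
      (fun s => s ^ (2 * m) / 2 * (∫ x : ℝ, (iteratedDeriv m u x) ^ 2)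
        - (1 / s) * ∫ x : ℝ, F (Real.sqrt s * u x))
      atTop atBot := by
  set p := 2 + 4 * m with hp
  -- Step 1: find ε > 0 and a set E of positive finite measure where |u| ≥ ε.
  obtain ⟨ε, hε, E, hEm, hE0, hEfin, hEε⟩ :
      ∃ ε > (0:ℝ), ∃ E : Set ℝ, MeasurableSet E ∧ 0 < volume E ∧ volume E < ⊤ ∧
        ∀ x ∈ E, ε ≤ |u x| := by
    set Aset : ℕ → Set ℝ := fun n =>
      {x | 1 / (n + 1 : ℝ) ≤ |u x|} ∩ Icc (-(n + 1 : ℝ)) (n + 1) with hAset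
    have hAmeas : ∀ n, MeasurableSet (Aset n) := fun n =>
      (measurableSet_le measurable_const humeas.abs).inter measurableSet_Icc
    have hsub : {x | u x ≠ 0} ⊆ ⋃ n, Aset n := by
      intro x hx
      have hux : 0 < |u x| := abs_pos.mpr hx
      obtain ⟨n, hn⟩ := exists_nat_ge (max (1 / |u x|) |x|)
      refine mem_iUnion.mpr ⟨n, ?_, ?_⟩
      · have h1 : 1 / |u x| ≤ (n : ℝ) + 1 :=
          le_trans (le_max_left _ _) (le_trans hn (by linarith))
        have hn1 : (0:ℝ) < (n : ℝ) + 1 := by positivity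
        rw [div_le_iff₀ hux] at h1
        rw [Set.mem_setOf_eq, div_le_iff₀ hn1]
        nlinarith
      · have h2 : |x| ≤ (n : ℝ) + 1 :=
          le_trans (le_max_right _ _) (le_trans hn (by linarith))
        exact abs_le.mp h2
    have hexists : ∃ n, 0 < volume (Aset n) := by
      by_contra h
      push_neg at h
      have hall : ∀ n, volume (Aset n) = 0 := fun n => le_antisymm (h n) (zero_le)
      have : volume {x | u x ≠ 0} = 0 :=
        measure_mono_null hsub (measure_iUnion_null hall)
      exact hune (by rwa [MeasureTheory.ae_iff])
    obtain ⟨n, hn⟩ := hexists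
    refine ⟨1 / (n + 1 : ℝ), by positivity, Aset n, hAmeas n, hn, ?_, ?_⟩
    · exact lt_of_le_of_lt (measure_mono (Set.inter_subset_right)) measure_Icc_lt_top
    · intro x hx; exact hx.1
  set A := ∫ x : ℝ, (iteratedDeriv m u x) ^ 2 with hA
  set c := ε ^ p * (volume E).toReal with hc
  have hc0 : 0 < c := mul_pos (pow_pos hε _) (ENNReal.toReal_pos hE0.ne' hEfin.ne)
  set K := (|A| / 2 + 1) / c with hK
  have hK0 : 0 < K := by
    apply div_pos _ hc0
    have := abs_nonneg A; linarith
  have hKc : A / 2 + 1 ≤ K * c := by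
    rw [hK, div_mul_cancel₀ _ hc0.ne']
    have := le_abs_self A; linarith
  -- Step 2: extract a threshold from hFlim.
  have hev : ∀ᶠ t in cocompact ℝ, K ≤ F t / |t| ^ p := hFlim.eventually_ge_atTop K
  obtain ⟨sC, hsC, h2⟩ := hasBasis_cocompact.eventually_iff.mp hev
  obtain ⟨T, hT⟩ := hsC.isBounded.subset_closedBall 0
  set T1 := max T 0 + 1 with hT1def
  have hT1 : (0:ℝ) < T1 := by
    have : (0:ℝ) ≤ max T 0 := le_max_right _ _
    linarith
  have hF : ∀ t : ℝ, T1 ≤ |t| → K * |t| ^ p ≤ F t := by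
    intro t ht
    have htC : t ∉ sC := by
      intro hmem
      have h3 := hT hmem
      rw [Metric.mem_closedBall, Real.dist_eq, sub_zero] at h3
      have : T ≤ max T 0 := le_max_left _ _
      linarith
    have h4 := h2 htC
    have hpos : 0 < |t| ^ p := pow_pos (lt_of_lt_of_le hT1 ht) p
    exact (le_div_iff₀ hpos).mp h4
  -- Step 3: the eventual bound on φ.
  set s₀ := max ((T1 / ε) ^ 2) 1 with hs₀
  have hbound : ∀ s : ℝ, s₀ ≤ s →
      s ^ (2 * m) / 2 * A - (1 / s) * (∫ x : ℝ, F (Real.sqrt s * u x))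
        ≤ -(s ^ (2 * m)) := by
    intro s hs
    have hs1 : (1:ℝ) ≤ s := le_trans (le_max_right _ _) hs
    have hspos : (0:ℝ) < s := by linarith
    have hsqnn : 0 ≤ Real.sqrt s := Real.sqrt_nonneg s
    have hsq : T1 / ε ≤ Real.sqrt s := by
      have h5 : (T1 / ε) ^ 2 ≤ s := le_trans (le_max_left _ _) hs
      have := Real.sqrt_le_sqrt h5
      rwa [Real.sqrt_sq (by positivity : (0:ℝ) ≤ T1 / ε)] at this
    have hT1le : T1 ≤ Real.sqrt s * ε := by
      rw [div_le_iff₀ hε] at hsq; linarith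
    -- pointwise lower bound on E
    have hptwise : ∀ x ∈ E, K * (Real.sqrt s * ε) ^ p ≤ F (Real.sqrt s * u x) := by
      intro x hx
      have hux : ε ≤ |u x| := hEε x hx
      have habs : Real.sqrt s * ε ≤ |Real.sqrt s * u x| := by
        rw [abs_mul, abs_of_nonneg hsqnn]
        exact mul_le_mul_of_nonneg_left hux hsqnn
      have hmem : T1 ≤ |Real.sqrt s * u x| := le_trans hT1le habs
      refine le_trans ?_ (hF _ hmem)
      apply mul_le_mul_of_nonneg_left _ hK0.le
      exact pow_le_pow_left₀ (by positivity) habs p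
    have hintF := hint s hspos
    have hlow1 : K * (Real.sqrt s * ε) ^ p * (volume E).toReal
        ≤ ∫ x in E, F (Real.sqrt s * u x) :=
      setIntegral_ge_of_const_le_real hEm hEfin.ne hptwise hintF.integrableOn
    have hlow2 : (∫ x in E, F (Real.sqrt s * u x)) ≤ ∫ x : ℝ, F (Real.sqrt s * u x) :=
      setIntegral_le_integral hintF (Filter.Eventually.of_forall fun x => hFnn _)
    have hsqpow : (Real.sqrt s) ^ p = s ^ (1 + 2 * m) := by
      have : p = 2 * (1 + 2 * m) := by omega
      rw [this, pow_mul, Real.sq_sqrt hspos.le]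
    have hlow : K * c * s ^ (1 + 2 * m) ≤ ∫ x : ℝ, F (Real.sqrt s * u x) := by
      refine le_trans ?_ (le_trans hlow1 hlow2)
      rw [mul_pow, hsqpow, hc]
      ring_nf
      nlinarith [hlow1]
    have hdiv : K * c * s ^ (2 * m) ≤ (1 / s) * (∫ x : ℝ, F (Real.sqrt s * u x)) := by
      rw [← sub_nonneg] at hlow ⊢
      have hpow : s ^ (1 + 2 * m) = s * s ^ (2 * m) := by
        rw [pow_add, pow_one]
      have : (1 / s) * (K * c * s ^ (1 + 2 * m)) = K * c * s ^ (2 * m) := by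
        rw [hpow]; field_simp
      calc (0:ℝ) ≤ (1 / s) * ((∫ x : ℝ, F (Real.sqrt s * u x)) - K * c * s ^ (1 + 2 * m)) := by
              apply mul_nonneg (by positivity) hlow
        _ = (1 / s) * (∫ x : ℝ, F (Real.sqrt s * u x)) - K * c * s ^ (2 * m) := by
              rw [mul_sub, this]
    have hspow : (0:ℝ) ≤ s ^ (2 * m) := by positivity
    have hfin : s ^ (2 * m) / 2 * A - K * c * s ^ (2 * m) ≤ -(s ^ (2 * m)) := by
      have h6 : A / 2 + 1 ≤ K * c := hKc
      nlinarith
    linarith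
  -- Step 4: conclude.
  have h2m : 2 * m ≠ 0 := by omega
  have hneg : Tendsto (fun s : ℝ => -(s ^ (2 * m))) atTop atBot :=
    tendsto_neg_atTop_atBot.comp (tendsto_pow_atTop h2m)
  refine tendsto_atBot_mono' atTop ?_ hneg
  filter_upwards [eventually_ge_atTop s₀] with s hs
  exact hbound s hs
end
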